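/- arXiv:1401.5011 — 2 statements merged into one kernel-verified Lean document; each statement's English description precedes it below -/
import Mathlib

section
/- Let K be a nondegenerate triangle in ℝ² with barycentric coordinates λ₁, λ₂, λ₃ and interior bubble function φ_K = 27 λ₁ λ₂ λ₃. Then there exists a constant C > 0 depending only on the minimal angle of K (in fact C may be taken independent of K for the L² equivalence on polynomials of fixed degree) such that for every polynomial v of degree at most m on K: C⁻¹ ∫_K v² dx ≤ ∫_K φ_K v² dx ≤ C ∫_K v² dx. -/
/-!
Two functions `v ↦ ∫_K w v²` that are continuous and homogeneous of degree two on a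
finite-dimensional space are comparable as soon as the one we divide by is positive away from
`0`: compare both on the (compact) unit sphere of a coordinate space. For polynomials of degree
`≤ m` and a continuous weight `w ≥ 0` on `K` that is positive in the interior, `∫_K w v²` is
positive for `v ≠ 0`, because a polynomial vanishing on a nonempty open set is zero. The bubble
function of a simplex is such a weight, since the barycentric coordinates are nonnegative on the
simplex and positive in its interior.
-/

open MeasureTheory Set

section Compactness

variable {E : Type*} [NormedAddCommGroup E] [NormedSpace ℝ E] [FiniteDimensional ℝ E]

theorem exists_le_mul_of_homogeneous_two {f g : E → ℝ} (hf : Continuous f) (hg : Continuous g)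
    (hf_smul : ∀ (r : ℝ) v, f (r • v) = r ^ 2 * f v)
    (hg_smul : ∀ (r : ℝ) v, g (r • v) = r ^ 2 * g v)
    (hf_pos : ∀ v ≠ 0, 0 < f v) :
    ∃ C, 0 < C ∧ ∀ v, g v ≤ C * f v := by
  have hf0 : f 0 = 0 := by simpa using hf_smul 0 0
  have hg0 : g 0 = 0 := by simpa using hg_smul 0 0
  rcases subsingleton_or_nontrivial E with hE | hE
  · exact ⟨1, one_pos, fun v => by simp [Subsingleton.elim v 0, hf0, hg0]⟩
  have hS : IsCompact (Metric.sphere (0 : E) 1) := isCompact_sphere 0 1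
  have hS_ne : (Metric.sphere (0 : E) 1).Nonempty := NormedSpace.sphere_nonempty.2 zero_le_one
  obtain ⟨u₀, hu₀, hu₀_min⟩ := hS.exists_isMinOn hS_ne hf.continuousOn
  obtain ⟨u₁, -, hu₁_max⟩ := hS.exists_isMaxOn hS_ne hg.continuousOn
  have hfu₀ : 0 < f u₀ := hf_pos u₀ (ne_zero_of_mem_unit_sphere ⟨u₀, hu₀⟩)
  refine ⟨(|g u₁| + 1) / f u₀, by positivity, fun v => ?_⟩
  rcases eq_or_ne v 0 with rfl | hv
  · simp [hf0, hg0]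
  set u := ‖v‖⁻¹ • v
  have hu : u ∈ Metric.sphere (0 : E) 1 := by simp [u, norm_smul, norm_ne_zero_iff.2 hv]
  have hv_eq : v = ‖v‖ • u := by
    rw [smul_smul, mul_inv_cancel₀ (norm_ne_zero_iff.2 hv), one_smul]
  have hgu : g u ≤ |g u₁| + 1 := (hu₁_max hu).trans (by linarith [le_abs_self (g u₁)])
  have hfu : |g u₁| + 1 ≤ (|g u₁| + 1) / f u₀ * f u := by
    rw [div_mul_eq_mul_div, le_div_iff₀ hfu₀]
    exact mul_le_mul_of_nonneg_left (hu₀_min hu) (by positivity)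
  rw [hv_eq, hf_smul, hg_smul, mul_left_comm]
  exact mul_le_mul_of_nonneg_left (hgu.trans hfu) (sq_nonneg _)

end Compactness

section WeightedL2

variable {X : Type*} [TopologicalSpace X] [T2Space X] [MeasurableSpace X] [OpensMeasurableSpace X]
  {μ : Measure X} {K : Set X}

theorem setIntegral_pos_of_continuous_of_mem_interior [IsFiniteMeasureOnCompacts μ]
    [μ.IsOpenPosMeasure] {f : X → ℝ}
    (hf : Continuous f) (hK : IsCompact K) (hf_nonneg : ∀ x ∈ K, 0 ≤ f x) {x₀ : X}
    (hx₀ : x₀ ∈ interior K) (hfx₀ : f x₀ ≠ 0) : 0 < ∫ x in K, f x ∂μ := by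
  rw [setIntegral_pos_iff_support_of_nonneg_ae
    ((ae_restrict_iff' hK.measurableSet).2 (.of_forall hf_nonneg))
    (hf.continuousOn.integrableOn_compact hK)]
  calc 0 < μ (Function.support f ∩ interior K) :=
        (hf.isOpen_support.inter isOpen_interior).measure_pos μ ⟨x₀, hfx₀, hx₀⟩
    _ ≤ μ (Function.support f ∩ K) := measure_mono (inter_subset_inter_right _ interior_subset)

theorem exists_setIntegral_mul_sq_le_mul [IsFiniteMeasureOnCompacts μ] [IsLocallyFiniteMeasure μ]
    [μ.IsOpenPosMeasure]
    (V : Submodule ℝ (X → ℝ)) [FiniteDimensional ℝ V] (hV_cont : ∀ f ∈ V, Continuous f)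
    (hV_eqOn : ∀ f ∈ V, EqOn f 0 (interior K) → f = 0) (hK : IsCompact K) {w₁ w₂ : X → ℝ}
    (hw₁ : Continuous w₁) (hw₂ : Continuous w₂) (hw₂_nonneg : ∀ x ∈ K, 0 ≤ w₂ x)
    (hw₂_pos : ∀ x ∈ interior K, 0 < w₂ x) :
    ∃ C, 0 < C ∧ ∀ f ∈ V, ∫ x in K, w₁ x * f x ^ 2 ∂μ ≤ C * ∫ x in K, w₂ x * f x ^ 2 ∂μ := by
  let b := Module.finBasis ℝ V
  let F : (Fin (Module.finrank ℝ V) → ℝ) → X → ℝ := fun c => b.equivFun.symm c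
  have hF_apply : ∀ c x, F c x = ∑ i, c i * (b i : X → ℝ) x := fun c x => by
    simp [F, Module.Basis.equivFun_symm_apply, Finset.sum_apply]
  have hF_cont : Continuous (Function.uncurry F) := by
    have := fun i => hV_cont _ (b i).2
    simp only [Function.uncurry_def, hF_apply]
    fun_prop
  have hF_smul : ∀ (r : ℝ) c x, F (r • c) x = r * F c x := fun r c x => by
    simp only [F, map_smul, Submodule.coe_smul, Pi.smul_apply, smul_eq_mul]
  have hQ_cont : ∀ w : X → ℝ, Continuous w → Continuous fun c => ∫ x in K, w x * F c x ^ 2 ∂μ :=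
    fun w hw => continuous_parametric_integral_of_continuous (by fun_prop) hK
  have hQ_smul : ∀ (w : X → ℝ) (r : ℝ) c,
      ∫ x in K, w x * F (r • c) x ^ 2 ∂μ = r ^ 2 * ∫ x in K, w x * F c x ^ 2 ∂μ := fun w r c => by
    simp_rw [hF_smul, mul_pow, mul_left_comm (w _)]
    exact integral_const_mul _ _
  have hQ_pos : ∀ c ≠ 0, 0 < ∫ x in K, w₂ x * F c x ^ 2 ∂μ := by
    intro c hc
    have hFc : F c ≠ 0 := by
      simpa only [F, ne_eq, Submodule.coe_eq_zero, LinearEquiv.map_eq_zero_iff] using hc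
    obtain ⟨x₀, hx₀, hFx₀⟩ : ∃ x ∈ interior K, F c x ≠ 0 := by
      by_contra! h
      exact hFc (hV_eqOn _ (b.equivFun.symm c).2 h)
    exact setIntegral_pos_of_continuous_of_mem_interior
      (hw₂.mul ((hF_cont.comp (Continuous.prodMk_right c)).pow 2)) hK
      (fun x hx => mul_nonneg (hw₂_nonneg x hx) (sq_nonneg _)) hx₀
      (mul_ne_zero (hw₂_pos x₀ hx₀).ne' (pow_ne_zero 2 hFx₀))
  obtain ⟨C, hC, hle⟩ := exists_le_mul_of_homogeneous_two (hQ_cont w₂ hw₂) (hQ_cont w₁ hw₁)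
    (hQ_smul w₂) (hQ_smul w₁) hQ_pos
  refine ⟨C, hC, fun f hf => ?_⟩
  have : F (b.equivFun ⟨f, hf⟩) = f := by simp only [F, LinearEquiv.symm_apply_apply]
  simpa only [this] using hle (b.equivFun ⟨f, hf⟩)

theorem exists_weighted_setIntegral_sq_equiv [IsFiniteMeasureOnCompacts μ]
    [IsLocallyFiniteMeasure μ] [μ.IsOpenPosMeasure] (V : Submodule ℝ (X → ℝ)) [FiniteDimensional ℝ V]
    (hV_cont : ∀ f ∈ V, Continuous f) (hV_eqOn : ∀ f ∈ V, EqOn f 0 (interior K) → f = 0)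
    (hK : IsCompact K) {w : X → ℝ} (hw : Continuous w) (hw_nonneg : ∀ x ∈ K, 0 ≤ w x)
    (hw_pos : ∀ x ∈ interior K, 0 < w x) :
    ∃ C, 0 < C ∧ ∀ f ∈ V,
      C⁻¹ * ∫ x in K, f x ^ 2 ∂μ ≤ ∫ x in K, w x * f x ^ 2 ∂μ ∧
      ∫ x in K, w x * f x ^ 2 ∂μ ≤ C * ∫ x in K, f x ^ 2 ∂μ := by
  obtain ⟨C₁, hC₁, h₁⟩ := exists_setIntegral_mul_sq_le_mul (μ := μ) V hV_cont hV_eqOn hK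
    (w₁ := fun _ => 1) continuous_const hw hw_nonneg hw_pos
  obtain ⟨C₂, hC₂, h₂⟩ := exists_setIntegral_mul_sq_le_mul (μ := μ) V hV_cont hV_eqOn hK
    (w₂ := fun _ => 1) hw continuous_const (fun _ _ => zero_le_one) (fun _ _ => one_pos)
  simp only [one_mul] at h₁ h₂
  refine ⟨max C₁ C₂, lt_max_of_lt_left hC₁, fun f hf => ⟨?_, ?_⟩⟩
  · have hwf : 0 ≤ ∫ x in K, w x * f x ^ 2 ∂μ :=
      setIntegral_nonneg hK.measurableSet fun x hx => mul_nonneg (hw_nonneg x hx) (sq_nonneg _)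
    rw [inv_mul_le_iff₀ (lt_max_of_lt_left hC₁)]
    exact (h₁ f hf).trans (mul_le_mul_of_nonneg_right (le_max_left _ _) hwf)
  · exact (h₂ f hf).trans (mul_le_mul_of_nonneg_right (le_max_right _ _)
      (setIntegral_nonneg hK.measurableSet fun _ _ => sq_nonneg _))

end WeightedL2

theorem MvPolynomial.eq_zero_of_isOpen_of_eval_eq_zero {σ : Type*} [Fintype σ]
    {p : MvPolynomial σ ℝ} {U : Set (σ → ℝ)} (hU : IsOpen U) (hU_ne : U.Nonempty)
    (h : ∀ x ∈ U, eval x p = 0) : p = 0 := by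
  obtain ⟨x₀, hx₀⟩ := hU_ne
  obtain ⟨δ, hδ, hball⟩ := Metric.isOpen_iff.1 hU x₀ hx₀
  refine funext_set (fun i => Metric.ball (x₀ i) δ) (fun i => ?_) fun x hx => ?_
  · rw [Real.ball_eq_Ioo]
    exact Ioo_infinite (by linarith)
  · rw [map_zero]
    exact h x (hball (by rwa [ball_pi x₀ hδ]))

section PolynomialFunctions

variable (ι : Type*)

noncomputable def polynomialFunctionsDegreeLE (m : ℕ) : Submodule ℝ (EuclideanSpace ℝ ι → ℝ) :=
  (MvPolynomial.restrictTotalDegree ι ℝ m).map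
    (LinearMap.pi fun x : EuclideanSpace ℝ ι => (MvPolynomial.aeval fun i => x i).toLinearMap)

variable {ι}

theorem eval_mem_polynomialFunctionsDegreeLE {m : ℕ} {p : MvPolynomial ι ℝ}
    (hp : p.totalDegree ≤ m) :
    (fun x : EuclideanSpace ℝ ι => MvPolynomial.eval (fun i => x i) p) ∈
      polynomialFunctionsDegreeLE ι m :=
  ⟨p, (MvPolynomial.mem_restrictTotalDegree _ _ _).2 hp, by ext; simp⟩

theorem continuous_of_mem_polynomialFunctionsDegreeLE {m : ℕ} {f : EuclideanSpace ℝ ι → ℝ}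
    (hf : f ∈ polynomialFunctionsDegreeLE ι m) : Continuous f := by
  obtain ⟨p, -, rfl⟩ := hf
  exact (MvPolynomial.continuous_eval p).comp (PiLp.continuous_ofLp 2 _)

variable [Fintype ι]

instance (m : ℕ) : FiniteDimensional ℝ (polynomialFunctionsDegreeLE ι m) :=
  Module.Finite.map _ _

theorem eq_zero_of_mem_polynomialFunctionsDegreeLE_of_eqOn {m : ℕ} {f : EuclideanSpace ℝ ι → ℝ}
    (hf : f ∈ polynomialFunctionsDegreeLE ι m) {U : Set (EuclideanSpace ℝ ι)} (hU : IsOpen U)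
    (hU_ne : U.Nonempty) (hfU : EqOn f 0 U) : f = 0 := by
  obtain ⟨p, -, rfl⟩ := hf
  obtain ⟨x₀, hx₀⟩ := hU_ne
  have hp : p = 0 :=
    MvPolynomial.eq_zero_of_isOpen_of_eval_eq_zero (hU.preimage (PiLp.continuous_toLp 2 _))
      ⟨WithLp.ofLp x₀, by simpa using hx₀⟩ fun x hx => hfU hx
  simp [hp]

end PolynomialFunctions

namespace AffineBasis

theorem coord_eq_of_apply_eq {ι k V P : Type*} [Ring k] [AddCommGroup V] [Module k V]
    [AddTorsor V P] [DecidableEq ι] (b : AffineBasis ι k P) (i : ι) {L : P →ᵃ[k] k}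
    (hL : ∀ j, L (b j) = if i = j then 1 else 0) : b.coord i = L :=
  AffineMap.ext_on b.tot (by rintro _ ⟨j, rfl⟩; simp [b.coord_apply, hL])

variable {ι : Type*} [Fintype ι] {E : Type*} [NormedAddCommGroup E] [NormedSpace ℝ E]

/-- The interior bubble function of the simplex spanned by `b`, normalized to have maximum `1`
(e.g. `27 λ₁ λ₂ λ₃` on a triangle). -/
noncomputable def bubble (b : AffineBasis ι ℝ E) (x : E) : ℝ :=
  (Fintype.card ι : ℝ) ^ Fintype.card ι * ∏ i, b.coord i x

theorem continuous_bubble [FiniteDimensional ℝ E] (b : AffineBasis ι ℝ E) :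
    Continuous b.bubble := by
  have := fun i => (b.coord i).continuous_of_finiteDimensional
  unfold bubble
  fun_prop

theorem bubble_nonneg (b : AffineBasis ι ℝ E) {x : E} (hx : x ∈ convexHull ℝ (range b)) :
    0 ≤ b.bubble x := by
  rw [b.convexHull_eq_nonneg_coord] at hx
  exact mul_nonneg (by positivity) (Finset.prod_nonneg fun i _ => hx i)

theorem bubble_pos (b : AffineBasis ι ℝ E) {x : E} (hx : x ∈ interior (convexHull ℝ (range b))) :
    0 < b.bubble x := by
  have := b.nonempty
  rw [b.interior_convexHull] at hx
  exact mul_pos (by positivity) (Finset.prod_pos fun i _ => hx i)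

theorem exists_setIntegral_bubble_mul_sq_equiv {σ : Type*} [Fintype σ]
    (b : AffineBasis ι ℝ (EuclideanSpace ℝ σ)) (m : ℕ) :
    ∃ C, 0 < C ∧ ∀ p : MvPolynomial σ ℝ, p.totalDegree ≤ m →
      C⁻¹ * ∫ x in convexHull ℝ (range b), MvPolynomial.eval (fun i => x i) p ^ 2 ≤
        ∫ x in convexHull ℝ (range b), b.bubble x * MvPolynomial.eval (fun i => x i) p ^ 2 ∧
      ∫ x in convexHull ℝ (range b), b.bubble x * MvPolynomial.eval (fun i => x i) p ^ 2 ≤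
        C * ∫ x in convexHull ℝ (range b), MvPolynomial.eval (fun i => x i) p ^ 2 := by
  obtain ⟨C, hC, hCV⟩ := exists_weighted_setIntegral_sq_equiv (μ := volume)
    (polynomialFunctionsDegreeLE σ m) (fun _ => continuous_of_mem_polynomialFunctionsDegreeLE)
    (fun _ hf => eq_zero_of_mem_polynomialFunctionsDegreeLE_of_eqOn hf isOpen_interior
      ⟨_, b.centroid_mem_interior_convexHull⟩)
    ((finite_range b).isCompact_convexHull ℝ) b.continuous_bubble (fun _ => b.bubble_nonneg)
    (fun _ => b.bubble_pos)
  exact ⟨C, hC, fun p hp => hCV _ (eval_mem_polynomialFunctionsDegreeLE hp)⟩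

end AffineBasis

theorem stmt_7_general
    (v₁ v₂ v₃ : EuclideanSpace ℝ (Fin 2))
    (hnd : AffineIndependent ℝ ![v₁, v₂, v₃])
    (L₁ L₂ L₃ : EuclideanSpace ℝ (Fin 2) →ᵃ[ℝ] ℝ)
    (h11 : L₁ v₁ = 1) (h12 : L₁ v₂ = 0) (h13 : L₁ v₃ = 0)
    (h21 : L₂ v₁ = 0) (h22 : L₂ v₂ = 1) (h23 : L₂ v₃ = 0)
    (h31 : L₃ v₁ = 0) (h32 : L₃ v₂ = 0) (h33 : L₃ v₃ = 1)
    (K : Set (EuclideanSpace ℝ (Fin 2)))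
    (hK : K = convexHull ℝ {v₁, v₂, v₃})
    (φ : EuclideanSpace ℝ (Fin 2) → ℝ)
    (hφ : ∀ x, φ x = 27 * L₁ x * L₂ x * L₃ x)
    (m : ℕ) :
    ∃ C : ℝ, 0 < C ∧ ∀ p : MvPolynomial (Fin 2) ℝ, p.totalDegree ≤ m →
      C⁻¹ * (∫ x in K, (MvPolynomial.eval (fun i => x i) p) ^ 2) ≤
        (∫ x in K, φ x * (MvPolynomial.eval (fun i => x i) p) ^ 2) ∧
      (∫ x in K, φ x * (MvPolynomial.eval (fun i => x i) p) ^ 2) ≤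
        C * (∫ x in K, (MvPolynomial.eval (fun i => x i) p) ^ 2) := by
  let b : AffineBasis (Fin 3) ℝ (EuclideanSpace ℝ (Fin 2)) :=
    ⟨![v₁, v₂, v₃], hnd, hnd.affineSpan_eq_top_iff_card_eq_finrank_add_one.2 (by simp)⟩
  have hb : ⇑b = ![v₁, v₂, v₃] := rfl
  have hKb : K = convexHull ℝ (range b) := by
    rw [hK, hb, Matrix.range_cons, Matrix.range_cons_cons_empty, singleton_union]
  have hφb : φ = b.bubble := by
    have h₁ : b.coord 0 = L₁ := b.coord_eq_of_apply_eq 0 fun j => by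
      fin_cases j <;> simp [hb, h11, h12, h13]
    have h₂ : b.coord 1 = L₂ := b.coord_eq_of_apply_eq 1 fun j => by
      fin_cases j <;> simp [hb, h21, h22, h23]
    have h₃ : b.coord 2 = L₃ := b.coord_eq_of_apply_eq 2 fun j => by
      fin_cases j <;> simp [hb, h31, h32, h33]
    funext x
    rw [hφ, AffineBasis.bubble, Fin.prod_univ_three, h₁, h₂, h₃]
    norm_num [mul_assoc]
  subst hKb hφb
  exact b.exists_setIntegral_bubble_mul_sq_equiv m

/-- L² norm equivalence with the interior bubble weight on
    polynomials of degree at most `m` on a nondegenerate triangle `K`. -/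
theorem stmt_7
    (v₁ v₂ v₃ : EuclideanSpace ℝ (Fin 2))
    (hnd : AffineIndependent ℝ ![v₁, v₂, v₃])
    (L₁ L₂ L₃ : EuclideanSpace ℝ (Fin 2) →ᵃ[ℝ] ℝ)
    (hsum : ∀ x, L₁ x + L₂ x + L₃ x = 1)
    (h11 : L₁ v₁ = 1) (h12 : L₁ v₂ = 0) (h13 : L₁ v₃ = 0)
    (h21 : L₂ v₁ = 0) (h22 : L₂ v₂ = 1) (h23 : L₂ v₃ = 0)
    (h31 : L₃ v₁ = 0) (h32 : L₃ v₂ = 0) (h33 : L₃ v₃ = 1)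
    (K : Set (EuclideanSpace ℝ (Fin 2)))
    (hK : K = convexHull ℝ {v₁, v₂, v₃})
    (φ : EuclideanSpace ℝ (Fin 2) → ℝ)
    (hφ : ∀ x, φ x = 27 * L₁ x * L₂ x * L₃ x)
    (m : ℕ) :
    ∃ C : ℝ, 0 < C ∧ ∀ p : MvPolynomial (Fin 2) ℝ, p.totalDegree ≤ m →
      C⁻¹ * (∫ x in K, (MvPolynomial.eval (fun i => x i) p) ^ 2) ≤
        (∫ x in K, φ x * (MvPolynomial.eval (fun i => x i) p) ^ 2) ∧
      (∫ x in K, φ x * (MvPolynomial.eval (fun i => x i) p) ^ 2) ≤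
        C * (∫ x in K, (MvPolynomial.eval (fun i => x i) p) ^ 2) :=
  stmt_7_general v₁ v₂ v₃ hnd L₁ L₂ L₃ h11 h12 h13 h21 h22 h23 h31 h32 h33 K hK φ hφ m
end

section
/- Let V be a real Hilbert space, a : V × V → ℝ bounded bilinear, g > 0, Γ₂ a measure space, γ : V → L²(Γ₂) a bounded linear (trace) map, f ∈ V*, and λ ∈ L^∞(Γ₂) with |λ| ≤ 1 a.e. Suppose u ∈ V satisfies a(u,v) + ∫_{Γ₂} g λ γ(v) ds = f(v) for all v ∈ V, and λ·γ(u) = |γ(u)| a.e. on Γ₂. Then u solves the variational inequality a(u, v - u) + j(v) - j(u) ≥ f(v - u) for all v ∈ V, where j(v) = ∫_{Γ₂} g|γ(v)| ds. -/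
/-!
Since `|λ| ≤ 1` and `λ γ(u) = |γ(u)|`, the function `g λ` is pointwise a subgradient of
`t ↦ g |t|` at `γ(u)`: `g λ (γ(v) - γ(u)) ≤ g |γ(v)| - g |γ(u)|`. Integrating over `Γ₂` and
testing the multiplier equation with `v - u` turns this into the variational inequality.
-/

open MeasureTheory

lemma mul_le_mul_abs_of_abs_le {w c : ℝ} (hw : |w| ≤ c) (t : ℝ) : w * t ≤ c * |t| :=
  calc w * t ≤ |w * t| := le_abs_self _
    _ = |w| * |t| := abs_mul w t
    _ ≤ c * |t| := mul_le_mul_of_nonneg_right hw (abs_nonneg t)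

theorem integral_mul_sub_le_integral_abs_sub {Ω : Type*} [MeasurableSpace Ω] {μ : Measure Ω}
    {w φ ψ : Ω → ℝ} {c : ℝ} (hw_meas : AEStronglyMeasurable w μ) (hw : ∀ᵐ x ∂μ, |w x| ≤ c)
    (hφ : Integrable φ μ) (hψ : Integrable ψ μ) (hwψ : ∀ᵐ x ∂μ, w x * ψ x = c * |ψ x|) :
    ∫ x, w x * (φ x - ψ x) ∂μ ≤ (∫ x, c * |φ x| ∂μ) - ∫ x, c * |ψ x| ∂μ := by
  have hwφ : Integrable (fun x => w x * φ x) μ := hφ.bdd_mul hw_meas hw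
  have hwψ_int : Integrable (fun x => w x * ψ x) μ := hψ.bdd_mul hw_meas hw
  have h_split : ∫ x, w x * (φ x - ψ x) ∂μ = (∫ x, w x * φ x ∂μ) - ∫ x, w x * ψ x ∂μ := by
    simp only [mul_sub]
    exact integral_sub hwφ hwψ_int
  have h_at_ψ : ∫ x, w x * ψ x ∂μ = ∫ x, c * |ψ x| ∂μ := integral_congr_ae hwψ
  have h_at_φ : ∫ x, w x * φ x ∂μ ≤ ∫ x, c * |φ x| ∂μ := by
    refine integral_mono_ae hwφ (hφ.abs.const_mul c) ?_
    filter_upwards [hw] with x hx using mul_le_mul_abs_of_abs_le hx (φ x)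
  linarith

theorem stmt_15_general {V : Type*} [NormedAddCommGroup V] [InnerProductSpace ℝ V]
    {Ω : Type*} [MeasurableSpace Ω] (μ : Measure Ω) [IsFiniteMeasure μ]
    (a : V → V → ℝ)
    (g : ℝ) (hg : 0 < g)
    (γ : V →ₗ[ℝ] (Ω → ℝ))
    (hγ_meas : ∀ v, MemLp (γ v) 2 μ)
    (f : V →L[ℝ] ℝ)
    (lam : Ω → ℝ) (hlam_meas : Measurable lam)
    (hlam_bdd : ∀ᵐ x ∂μ, |lam x| ≤ 1)
    (u : V)
    (heq : ∀ v : V, a u v + ∫ x, g * lam x * γ v x ∂μ = f v)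
    (hcomp : ∀ᵐ x ∂μ, lam x * γ u x = |γ u x|) :
    ∀ v : V, a u (v - u) + (∫ x, g * |γ v x| ∂μ) - (∫ x, g * |γ u x| ∂μ)
      ≥ f (v - u) := by
  intro v
  have hγ_int : ∀ v, Integrable (γ v) μ := fun v => (hγ_meas v).integrable (by norm_num)
  have hw_bdd : ∀ᵐ x ∂μ, |g * lam x| ≤ g := by
    filter_upwards [hlam_bdd] with x hx
    rw [abs_mul, abs_of_pos hg]
    exact mul_le_of_le_one_right hg.le hx
  have hw_at_u : ∀ᵐ x ∂μ, g * lam x * γ u x = g * |γ u x| := by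
    filter_upwards [hcomp] with x hx
    rw [mul_assoc, hx]
  have h_subgrad := integral_mul_sub_le_integral_abs_sub
    (hlam_meas.const_mul g).aestronglyMeasurable hw_bdd (hγ_int v) (hγ_int u) hw_at_u
  have h_test := heq (v - u)
  simp only [map_sub γ, Pi.sub_apply] at h_test
  linarith

/-- the Lagrange multiplier formulation implies the
    variational inequality for the frictional contact problem. -/
theorem stmt_15 {V : Type*} [NormedAddCommGroup V] [InnerProductSpace ℝ V]
    {Ω : Type*} [MeasurableSpace Ω] (μ : Measure Ω) [IsFiniteMeasure μ]
    (a : V → V → ℝ)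
    (ha_bilin₁ : ∀ w, IsLinearMap ℝ (fun v => a v w))
    (ha_bilin₂ : ∀ w, IsLinearMap ℝ (a w))
    (ha_bdd : ∃ M : ℝ, ∀ u v, |a u v| ≤ M * ‖u‖ * ‖v‖)
    (g : ℝ) (hg : 0 < g)
    (γ : V →ₗ[ℝ] (Ω → ℝ))
    (hγ_meas : ∀ v, MemLp (γ v) 2 μ)
    (hγ_bdd : ∃ C : ℝ, ∀ v, (∫ x, (γ v x) ^ 2 ∂μ) ≤ C * ‖v‖ ^ 2)
    (f : V →L[ℝ] ℝ)
    (lam : Ω → ℝ) (hlam_meas : Measurable lam)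
    (hlam_bdd : ∀ᵐ x ∂μ, |lam x| ≤ 1)
    (u : V)
    (heq : ∀ v : V, a u v + ∫ x, g * lam x * γ v x ∂μ = f v)
    (hcomp : ∀ᵐ x ∂μ, lam x * γ u x = |γ u x|) :
    ∀ v : V, a u (v - u) + (∫ x, g * |γ v x| ∂μ) - (∫ x, g * |γ u x| ∂μ)
      ≥ f (v - u) :=
  stmt_15_general μ a g hg γ hγ_meas f lam hlam_meas hlam_bdd u heq hcomp
end
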